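/- arXiv:math/9401201 — 3 statements merged into one kernel-verified Lean document; each statement's English description precedes it below -/
import Mathlib

section
/- Let A be a finite monoid generating set for a group G with word length ℓ. Suppose there exists δ such that every non-geodesic word over A is asynchronously δ-fellow travelled by a strictly shorter word over A with the same value in G. Then the set of geodesic words over A is a regular language. -/
/-! Words over a finite monoid generating set of a group, word length,
directed Cayley-graph distance, paths, asynchronous fellow travelling,
and the falsification-by-fellow-traveller property. -/

variable {A G : Type*} [Group G]

/-- The value in `G` of a word over the alphabet `A`. -/
def evalWord (π : A → G) (w : List A) : G := (w.map π).prod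

/-- `π : A → G` is a monoid generating set: every element is the value of a word. -/
def Generates (π : A → G) : Prop := ∀ g : G, ∃ w : List A, evalWord π w = g

/-- Word length of a group element: the least length of a word representing it. -/
noncomputable def wordLen (π : A → G) (g : G) : ℕ :=
  sInf {n | ∃ w : List A, evalWord π w = g ∧ w.length = n}

/-- Directed Cayley graph distance. -/
noncomputable def cayleyDist (π : A → G) (g h : G) : ℕ := wordLen π (g⁻¹ * h)

/-- The path in the Cayley graph determined by a word (constant after the end). -/
def pathOf (π : A → G) (w : List A) (t : ℕ) : G := evalWord π (w.take t)

/-- A word is geodesic if its length is the word length of its value. -/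
noncomputable def IsGeodesicWord (π : A → G) (w : List A) : Prop :=
  w.length = wordLen π (evalWord π w)

/-- `q` asynchronously `δ`-tracks `p`: there is a monotone proper
reparametrization `f` with `d(p t, q (f t)) ≤ δ` for all `t`. -/
def AsyncTracks (π : A → G) (δ : ℕ) (p q : ℕ → G) : Prop :=
  ∃ f : ℕ → ℕ, Monotone f ∧ (∀ N : ℕ, ∃ t, N ≤ f t) ∧
    ∀ t, cayleyDist π (p t) (q (f t)) ≤ δ

/-- Two paths asynchronously `δ`-fellow travel. -/
def AsyncFellow (π : A → G) (δ : ℕ) (p q : ℕ → G) : Prop :=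
  AsyncTracks π δ p q ∧ AsyncTracks π δ q p

/-- The falsification by fellow traveller property with constant `δ`:
every non-geodesic word is asynchronously `δ`-fellow travelled by a strictly
shorter word with the same value. -/
noncomputable def FFTP (π : A → G) (δ : ℕ) : Prop :=
  ∀ w : List A, ¬ IsGeodesicWord π w →
    ∃ v : List A, evalWord π v = evalWord π w ∧ v.length < w.length ∧
      AsyncFellow π δ (pathOf π w) (pathOf π v)

namespace FFTPAux

/-! ### Basic lemmas on `evalWord`, `wordLen`, `pathOf` -/

theorem evalWord_append (π : A → G) (x y : List A) :
    evalWord π (x ++ y) = evalWord π x * evalWord π y := by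
  simp [evalWord]

theorem evalWord_nil (π : A → G) : evalWord π ([] : List A) = 1 := rfl

theorem evalWord_singleton (π : A → G) (a : A) : evalWord π [a] = π a := by
  simp [evalWord]

theorem wordLen_le (π : A → G) {g : G} {x : List A} (h : evalWord π x = g) :
    wordLen π g ≤ x.length :=
  Nat.sInf_le ⟨x, h, rfl⟩

theorem exists_word (π : A → G) (hgen : Generates π) (g : G) :
    ∃ x : List A, evalWord π x = g ∧ x.length = wordLen π g := by
  have hne : {n | ∃ w : List A, evalWord π w = g ∧ w.length = n}.Nonempty := by
    obtain ⟨w, hw⟩ := hgen g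
    exact ⟨w.length, w, hw, rfl⟩
  obtain ⟨w, hw, hl⟩ := Nat.sInf_mem hne
  exact ⟨w, hw, hl⟩

theorem wordLen_one (π : A → G) : wordLen π (1 : G) = 0 :=
  Nat.le_zero.mp (wordLen_le π (evalWord_nil π))

theorem wordLen_mul_le (π : A → G) (hgen : Generates π) (g h : G) :
    wordLen π (g * h) ≤ wordLen π g + wordLen π h := by
  obtain ⟨x, hx, hxl⟩ := exists_word π hgen g
  obtain ⟨y, hy, hyl⟩ := exists_word π hgen h
  have : wordLen π (g * h) ≤ (x ++ y).length :=
    wordLen_le π (by rw [evalWord_append, hx, hy])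
  simpa [List.length_append, hxl, hyl] using this

theorem isGeo_nil (π : A → G) : IsGeodesicWord π ([] : List A) := by
  simp [IsGeodesicWord, evalWord_nil, wordLen_one]

theorem not_geo_of_shorter (π : A → G) {u x : List A}
    (hx : evalWord π x = evalWord π u) (hlt : x.length < u.length) :
    ¬ IsGeodesicWord π u := by
  intro h
  rw [IsGeodesicWord] at h
  have := wordLen_le π hx
  omega

theorem shorter_of_not_geo (π : A → G) {u : List A} (hu : ¬ IsGeodesicWord π u) :
    ∃ x : List A, evalWord π x = evalWord π u ∧ x.length < u.length := by
  have hle : wordLen π (evalWord π u) ≤ u.length := wordLen_le π rfl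
  have hlt : wordLen π (evalWord π u) < u.length := by
    rw [IsGeodesicWord] at hu; omega
  have hne : {n | ∃ w : List A, evalWord π w = evalWord π u ∧ w.length = n}.Nonempty :=
    ⟨u.length, u, rfl, rfl⟩
  obtain ⟨x, hx, hxl⟩ := Nat.sInf_mem hne
  exact ⟨x, hx, by rw [hxl]; exact hlt⟩

theorem not_geo_append (π : A → G) {u : List A} (z : List A) (hu : ¬ IsGeodesicWord π u) :
    ¬ IsGeodesicWord π (u ++ z) := by
  obtain ⟨x, hx, hxl⟩ := shorter_of_not_geo π hu
  refine not_geo_of_shorter π (x := x ++ z) ?_ ?_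
  · rw [evalWord_append, evalWord_append, hx]
  · simp only [List.length_append]; omega

theorem pathOf_zero (π : A → G) (w : List A) : pathOf π w 0 = 1 := rfl

theorem pathOf_of_length_le (π : A → G) (w : List A) {t : ℕ} (h : w.length ≤ t) :
    pathOf π w t = evalWord π w := by
  rw [pathOf, List.take_of_length_le h]

theorem pathOf_succ (π : A → G) (w : List A) {t : ℕ} (h : t < w.length) :
    pathOf π w (t + 1) = pathOf π w t * π w[t] := by
  rw [pathOf, pathOf, List.take_succ, evalWord_append]
  congr 1
  rw [List.getElem?_eq_getElem h]
  simp [evalWord]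

theorem pathOf_segment (π : A → G) (v : List A) {s s' : ℕ} (h : s ≤ s') :
    pathOf π v s * evalWord π ((v.take s').drop s) = pathOf π v s' := by
  rw [pathOf, pathOf, ← evalWord_append]
  congr 1
  conv_lhs =>
    rw [show v.take s = (v.take s').take s by
      rw [List.take_take]; congr 1; omega]
  exact List.take_append_drop _ _

theorem wordLen_pathOf_le (π : A → G) (w : List A) (t : ℕ) :
    wordLen π (pathOf π w t) ≤ t := by
  refine le_trans (wordLen_le π rfl) ?_
  simp [List.length_take]

/-! ### The ball of radius `δ` and constants -/

variable (π : A → G) (δ : ℕ)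

/-- The set of elements represented by words of length at most `δ`. -/
def Ball : Set G := {g : G | ∃ x : List A, x.length ≤ δ ∧ evalWord π x = g}

theorem one_mem_ball : (1 : G) ∈ Ball π δ := ⟨[], by simp, rfl⟩

theorem wordLen_le_of_mem_ball {g : G} (h : g ∈ Ball π δ) : wordLen π g ≤ δ := by
  obtain ⟨x, hx, rfl⟩ := h
  exact le_trans (wordLen_le π rfl) hx

theorem mem_ball_of_wordLen_le (hgen : Generates π) {g : G} (h : wordLen π g ≤ δ) :
    g ∈ Ball π δ := by
  obtain ⟨x, hx, hxl⟩ := exists_word π hgen g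
  exact ⟨x, by omega, hx⟩

theorem ball_finite [Finite A] : (Ball π δ).Finite := by
  have hsub : Ball π δ ⊆ evalWord π '' {x : List A | x.length ≤ δ} := by
    rintro g ⟨x, hx, rfl⟩
    exact ⟨x, hx, rfl⟩
  exact ((List.finite_length_le A δ).image _).subset hsub

variable [Fintype A]

/-- Bound for word lengths of inverses of letters. -/
noncomputable def da : ℕ := Finset.univ.sup fun a : A => wordLen π (π a)⁻¹

theorem wordLen_inv_letter_le (a : A) : wordLen π (π a)⁻¹ ≤ da π := by
  exact Finset.le_sup (f := fun a : A => wordLen π (π a)⁻¹) (Finset.mem_univ a)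

/-- Bound for word lengths of inverses of elements of the ball. -/
noncomputable def dstar : ℕ := (ball_finite π δ).toFinset.sup fun g => wordLen π g⁻¹

theorem wordLen_inv_le_dstar {g : G} (h : g ∈ Ball π δ) : wordLen π g⁻¹ ≤ dstar π δ := by
  exact Finset.le_sup (f := fun g : G => wordLen π g⁻¹)
    ((ball_finite π δ).mem_toFinset.mpr h)

noncomputable def lo : ℤ := -((δ : ℤ) + da π)

noncomputable def hi : ℤ := (dstar π δ : ℤ) + da π + 1

theorem zero_mem_win : (0 : ℤ) ∈ Set.Icc (lo π δ) (hi π δ) := by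
  simp only [Set.mem_Icc, lo, hi]
  constructor <;> omega

/-! ### The nondeterministic automaton recognizing non-geodesic words -/

/-- States of the automaton: `none` is an accept-all sink; `some (g, d)` records a
word difference `g` in the ball and an (integer) length deficit `d` in a window. -/
abbrev StT := Option ({g : G // g ∈ Ball π δ} × {d : ℤ // d ∈ Set.Icc (lo π δ) (hi π δ)})

/-- The NFA which accepts exactly the non-geodesic words. -/
noncomputable def nfa : NFA A (StT π δ) where
  step s a :=
    {s' | match s, s' with
      | some gd, some gd' => ∃ x : List A,
          (gd'.1 : G) = (π a)⁻¹ * gd.1 * evalWord π x ∧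
          (gd'.2 : ℤ) = (gd.2 : ℤ) + 1 - x.length
      | some gd, none => (gd.1 : G) = 1 ∧ 1 ≤ (gd.2 : ℤ)
      | none, some _ => False
      | none, none => True}
  start := {s | ∃ gb dw, s = some (gb, dw) ∧ (gb : G) = 1 ∧ (dw : ℤ) = 0}
  accept := {s | match s with
    | some gd => (gd.1 : G) = 1 ∧ 1 ≤ (gd.2 : ℤ)
    | none => True}

theorem step_some_some {gd gd'} {a : A} :
    some gd' ∈ (nfa π δ).step (some gd) a ↔ ∃ x : List A,
      (gd'.1 : G) = (π a)⁻¹ * gd.1 * evalWord π x ∧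
      (gd'.2 : ℤ) = (gd.2 : ℤ) + 1 - x.length := Iff.rfl

theorem step_some_none {gd} {a : A} :
    none ∈ (nfa π δ).step (some gd) a ↔ (gd.1 : G) = 1 ∧ 1 ≤ (gd.2 : ℤ) := Iff.rfl

theorem step_none_none {a : A} : none ∈ (nfa π δ).step none a := trivial

theorem not_step_none_some {gd} {a : A} : some gd ∉ (nfa π δ).step none a := fun h => h

theorem accept_some {gd} :
    some gd ∈ (nfa π δ).accept ↔ (gd.1 : G) = 1 ∧ 1 ≤ (gd.2 : ℤ) := Iff.rfl

theorem accept_none : none ∈ (nfa π δ).accept := trivial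

theorem mem_eval_append {σ : Type*} {M : NFA A σ} {u : List A} {a : A} {s s' : σ}
    (h : s ∈ M.eval u) (h' : s' ∈ M.step s a) : s' ∈ M.eval (u ++ [a]) := by
  rw [NFA.eval_append_singleton, NFA.mem_stepSet]
  exact ⟨s, h, h'⟩

/-! ### Soundness -/

/-- The invariant maintained along any run of the automaton. -/
def Inv (u : List A) : StT π δ → Prop
  | some gd => ∃ x : List A,
      evalWord π x = evalWord π u * gd.1 ∧ (x.length : ℤ) = (u.length : ℤ) - gd.2
  | none => ¬ IsGeodesicWord π u

theorem eval_inv : ∀ (u : List A) (s : StT π δ), s ∈ (nfa π δ).eval u → Inv π δ u s := by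
  intro u
  induction u using List.reverseRecOn with
  | nil =>
    intro s hs
    obtain ⟨gb, dw, rfl, h1, h0⟩ := hs
    exact ⟨[], by simp [evalWord_nil, h1], by simp [h0]⟩
  | append_singleton u a ih =>
    intro s' hs'
    rw [NFA.eval_append_singleton, NFA.mem_stepSet] at hs'
    obtain ⟨s, hs, hstep⟩ := hs'
    have hinv := ih s hs
    match s, s' with
    | some gd, some gd' =>
      obtain ⟨x, hx, hxl⟩ := hinv
      obtain ⟨y, hy, hyl⟩ := (step_some_some π δ).mp hstep
      refine ⟨x ++ y, ?_, ?_⟩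
      · rw [evalWord_append, hx, hy, evalWord_append, evalWord_singleton]
        group
      · simp only [List.length_append, List.length_singleton]
        push_cast
        push_cast at hxl hyl
        omega
    | some gd, none =>
      obtain ⟨h1, hd⟩ := (step_some_none π δ).mp hstep
      obtain ⟨x, hx, hxl⟩ := hinv
      refine not_geo_append π [a] (not_geo_of_shorter π (x := x) ?_ ?_)
      · rw [hx, h1, mul_one]
      · omega
    | none, none => exact not_geo_append π [a] hinv
    | none, some gd' => exact absurd hstep (not_step_none_some π δ)

theorem accepts_sound {w : List A} (hw : w ∈ (nfa π δ).accepts) :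
    ¬ IsGeodesicWord π w := by
  obtain ⟨s, hacc, hev⟩ := hw
  have hinv := eval_inv π δ w s hev
  match s with
  | none => exact hinv
  | some gd =>
    obtain ⟨h1, hd⟩ := (accept_some π δ).mp hacc
    obtain ⟨x, hx, hxl⟩ := hinv
    refine not_geo_of_shorter π (x := x) ?_ ?_
    · rw [hx, h1, mul_one]
    · omega

/-! ### Completeness: reaching an accepting state after a minimal non-geodesic prefix -/

theorem reach_accept (hgen : Generates π) (p v : List A)
    (hplen : 1 ≤ p.length)
    (hmin : ∀ t, t < p.length → IsGeodesicWord π (p.take t))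
    (hveq : evalWord π v = evalWord π p)
    (hvlt : v.length < p.length)
    (f : ℕ → ℕ) (hfmono : Monotone f)
    (hfd : ∀ t, cayleyDist π (pathOf π p t) (pathOf π v (f t)) ≤ δ) :
    ∃ (gb : {g : G // g ∈ Ball π δ}) (dw : {d : ℤ // d ∈ Set.Icc (lo π δ) (hi π δ)}),
      (gb : G) = 1 ∧ 1 ≤ (dw : ℤ) ∧ some (gb, dw) ∈ (nfa π δ).eval p := by
  set n := p.length with hn
  -- the last letter of `p`
  have hn1 : n - 1 < n := by omega
  have hlast : n - 1 < p.length := hn1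
  set b : A := p[n - 1] with hb
  -- `p` decomposes as `u ++ [b]`
  have hdecomp : p = p.take (n - 1) ++ [b] := by
    conv_lhs => rw [← List.take_length (l := p)]
    rw [← hn, show n = (n - 1) + 1 by omega, List.take_succ, List.getElem?_eq_getElem hlast]
    rfl
  have hulen : (p.take (n - 1)).length = n - 1 := by
    rw [List.length_take]; omega
  -- the prefix `u` is geodesic
  have hugeo : IsGeodesicWord π (p.take (n - 1)) := hmin _ hn1
  have hLu : wordLen π (evalWord π (p.take (n - 1))) = n - 1 := by
    rw [IsGeodesicWord] at hugeo; omega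
  -- lower bound on the word length of the value of `p`
  have hLp : (n : ℤ) - 1 - da π ≤ (wordLen π (evalWord π p) : ℤ) := by
    have hu_eq : evalWord π (p.take (n - 1)) = evalWord π p * (π b)⁻¹ := by
      conv_rhs => rw [hdecomp]
      rw [evalWord_append, evalWord_singleton]
      group
    have h1 : wordLen π (evalWord π (p.take (n - 1))) ≤
        wordLen π (evalWord π p) + wordLen π (π b)⁻¹ := by
      rw [hu_eq]; exact wordLen_mul_le π hgen _ _
    have h2 := wordLen_inv_letter_le π b
    have h3 : (n : ℤ) - 1 = (wordLen π (evalWord π (p.take (n - 1))) : ℤ) := by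
      rw [hLu]; omega
    omega
  -- slack of `v`
  have hslack : (v.length : ℤ) ≤ (wordLen π (evalWord π v) : ℤ) + da π := by
    rw [hveq]; omega
  -- the reparametrization
  set F : ℕ → ℕ := fun t => if t = 0 then 0 else if n ≤ t then v.length
    else min (f t) v.length with hF
  have hF0 : F 0 = 0 := by simp [hF]
  have hFn : F n = v.length := by
    have hn0 : ¬ n = 0 := by omega
    simp [hF, hn0]
  have hFv : ∀ t, F t ≤ v.length := by
    intro t
    by_cases h0 : t = 0
    · simp [hF, h0]
    by_cases h1 : n ≤ t
    · simp [hF, h0, h1]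
    · simp [hF, h0, h1]
  have hpathvF : ∀ t, 1 ≤ t → t < n → pathOf π v (F t) = pathOf π v (f t) := by
    intro t h1 h2
    have ht0 : ¬ t = 0 := by omega
    have htn : ¬ n ≤ t := by omega
    have : F t = min (f t) v.length := by simp [hF, ht0, htn]
    rw [this]
    rcases le_or_gt (f t) v.length with h | h
    · rw [min_eq_left h]
    · rw [min_eq_right h.le, pathOf_of_length_le π v le_rfl,
        pathOf_of_length_le π v h.le]
  -- the word differences lie in the ball
  have hG : ∀ t, t ≤ n → (pathOf π p t)⁻¹ * pathOf π v (F t) ∈ Ball π δ := by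
    intro t ht
    by_cases h0 : t = 0
    · subst h0
      rw [hF0, pathOf_zero, pathOf_zero]
      simpa using one_mem_ball π δ
    by_cases hnt : t = n
    · subst hnt
      rw [hFn, pathOf_of_length_le π v le_rfl, hveq, pathOf_of_length_le π p le_rfl]
      simpa using one_mem_ball π δ
    · have h1 : 1 ≤ t := by omega
      have h2 : t < n := by omega
      rw [hpathvF t h1 h2]
      exact mem_ball_of_wordLen_le π δ hgen (hfd t)
  -- window bounds
  have hWlow : ∀ t, t ≤ n → lo π δ ≤ (t : ℤ) - F t := by
    intro t ht
    by_cases h0 : t = 0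
    · subst h0; rw [hF0]; simp [lo]
    -- F t ≤ t + δ + da
    have hFtv : F t ≤ v.length := hFv t
    -- (a) prefix slack
    have ha : (F t : ℤ) ≤ (wordLen π (pathOf π v (F t)) : ℤ) +
        ((v.length : ℤ) - wordLen π (evalWord π v)) := by
      have hsplit : evalWord π v = pathOf π v (F t) * evalWord π (v.drop (F t)) := by
        rw [pathOf, ← evalWord_append, List.take_append_drop]
      have h1 : wordLen π (evalWord π v) ≤
          wordLen π (pathOf π v (F t)) + wordLen π (evalWord π (v.drop (F t))) := by
        rw [hsplit]; exact wordLen_mul_le π hgen _ _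
      have h2 : wordLen π (evalWord π (v.drop (F t))) ≤ v.length - F t := by
        refine le_trans (wordLen_le π rfl) ?_
        simp [List.length_drop]
      omega
    -- (c) distance bound
    have hc : (wordLen π (pathOf π v (F t)) : ℤ) ≤ (t : ℤ) + δ := by
      have hsplit : pathOf π v (F t) =
          pathOf π p t * ((pathOf π p t)⁻¹ * pathOf π v (F t)) := by group
      have h1 : wordLen π (pathOf π v (F t)) ≤
          wordLen π (pathOf π p t) + wordLen π ((pathOf π p t)⁻¹ * pathOf π v (F t)) := by
        conv_lhs => rw [hsplit]
        exact wordLen_mul_le π hgen _ _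
      have h2 := wordLen_pathOf_le π p t
      have h3 := wordLen_le_of_mem_ball π δ (hG t ht)
      omega
    rw [lo]
    omega
  have hWhigh : ∀ t, t ≤ n → (t : ℤ) - F t ≤ hi π δ := by
    intro t ht
    by_cases h0 : t = 0
    · subst h0; rw [hF0]; simp [hi]; omega
    by_cases hnt : t = n
    · subst hnt
      rw [hFn]
      have h1 : wordLen π (evalWord π v) ≤ v.length := wordLen_le π rfl
      rw [hi]
      have := hLp
      rw [← hveq] at this
      omega
    · have h2 : t < n := by omega
      -- t ≤ F t + dstar
      have hFtv : F t ≤ v.length := hFv t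
      have hWL : wordLen π (pathOf π v (F t)) ≤ F t := by
        refine le_trans (wordLen_le π rfl) ?_
        simp [pathOf, List.length_take]
      have hsplit : pathOf π p t =
          pathOf π v (F t) * ((pathOf π p t)⁻¹ * pathOf π v (F t))⁻¹ := by group
      have h3 : wordLen π (pathOf π p t) ≤
          wordLen π (pathOf π v (F t)) +
            wordLen π (((pathOf π p t)⁻¹ * pathOf π v (F t))⁻¹) := by
        conv_lhs => rw [hsplit]
        exact wordLen_mul_le π hgen _ _
      have h4 : wordLen π (((pathOf π p t)⁻¹ * pathOf π v (F t))⁻¹) ≤ dstar π δ :=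
        wordLen_inv_le_dstar π δ (hG t ht)
      have h5 : wordLen π (pathOf π p t) = t := by
        have := hmin t h2
        rw [IsGeodesicWord] at this
        have hlt : (p.take t).length = t := by simp [List.length_take]; omega
        rw [pathOf, ← this, hlt]
      rw [hi]
      omega
  -- monotonicity step of F
  have hFstep : ∀ t, t + 1 ≤ n → F t ≤ F (t + 1) := by
    intro t ht
    by_cases h0 : t = 0
    · subst h0; rw [hF0]; omega
    have ht0 : ¬ t = 0 := h0
    have htn : ¬ n ≤ t := by omega
    have h1 : F t = min (f t) v.length := by simp [hF, ht0, htn]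
    by_cases h2 : t + 1 = n
    · rw [h1, h2, hFn]; exact min_le_right _ _
    · have ht0' : ¬ t + 1 = 0 := by omega
      have htn' : ¬ n ≤ t + 1 := by omega
      have : F (t + 1) = min (f (t + 1)) v.length := by simp [hF, ht0', htn']
      rw [h1, this]
      exact min_le_min (hfmono (Nat.le_succ t)) le_rfl
  -- main induction along p
  have key : ∀ t, t ≤ n →
      ∃ (gb : {g : G // g ∈ Ball π δ}) (dw : {d : ℤ // d ∈ Set.Icc (lo π δ) (hi π δ)}),
        (gb : G) = (pathOf π p t)⁻¹ * pathOf π v (F t) ∧ (dw : ℤ) = (t : ℤ) - F t ∧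
        some (gb, dw) ∈ (nfa π δ).eval (p.take t) := by
    intro t
    induction t with
    | zero =>
      intro _
      refine ⟨⟨1, one_mem_ball π δ⟩, ⟨0, zero_mem_win π δ⟩, ?_, ?_, ?_⟩
      · rw [hF0, pathOf_zero, pathOf_zero]; group
      · rw [hF0]; simp
      · rw [List.take_zero]
        exact ⟨⟨1, one_mem_ball π δ⟩, ⟨0, zero_mem_win π δ⟩, rfl, rfl, rfl⟩
    | succ t iht =>
      intro ht1
      obtain ⟨gb, dw, hgb, hdw, hev⟩ := iht (by omega)
      have htn : t < n := by omega
      refine ⟨⟨_, hG (t + 1) ht1⟩,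
        ⟨(t + 1 : ℤ) - F (t + 1), Set.mem_Icc.mpr ⟨hWlow _ ht1, hWhigh _ ht1⟩⟩,
        rfl, rfl, ?_⟩
      have htake : p.take (t + 1) = p.take t ++ [p[t]] := by
        rw [List.take_succ, List.getElem?_eq_getElem htn]
        rfl
      rw [htake]
      refine mem_eval_append hev ?_
      rw [step_some_some]
      refine ⟨(v.take (F (t + 1))).drop (F t), ?_, ?_⟩
      · show ((pathOf π p (t + 1))⁻¹ * pathOf π v (F (t + 1)) : G) = _
        rw [hgb, pathOf_succ π p htn, ← pathOf_segment π v (hFstep t ht1)]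
        group
      · show ((t + 1 : ℤ) - F (t + 1) : ℤ) = _
        have hlen : ((v.take (F (t + 1))).drop (F t)).length = F (t + 1) - F t := by
          rw [List.length_drop, List.length_take]
          have := hFv (t + 1)
          omega
        rw [hdw, hlen, Nat.cast_sub (hFstep t ht1)]
        push_cast
        ring
  obtain ⟨gb, dw, hgb, hdw, hev⟩ := key n le_rfl
  refine ⟨gb, dw, ?_, ?_, ?_⟩
  · rw [hgb, hFn, pathOf_of_length_le π v le_rfl, hveq, pathOf_of_length_le π p le_rfl]
    group
  · rw [hdw, hFn]; omega
  · rwa [List.take_length] at hev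

/-- Completeness of the automaton. -/
theorem accepts_complete (hgen : Generates π) (hfftp : FFTP π δ)
    {w : List A} (hw : ¬ IsGeodesicWord π w) : w ∈ (nfa π δ).accepts := by
  classical
  have hex : ∃ m, ¬ IsGeodesicWord π (w.take m) :=
    ⟨w.length, by rwa [List.take_length]⟩
  set n := Nat.find hex with hndef
  have hn : ¬ IsGeodesicWord π (w.take n) := Nat.find_spec hex
  have hmin' : ∀ m, m < n → IsGeodesicWord π (w.take m) := fun m hm =>
    by_contra fun h => Nat.find_min hex hm h
  have hn1 : 1 ≤ n := by
    by_contra h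
    have h0 : n = 0 := by omega
    rw [h0] at hn
    exact hn (by simpa using isGeo_nil π)
  have hnw : n ≤ w.length := Nat.find_le (by rwa [List.take_length])
  set p := w.take n with hp
  have hplen : p.length = n := by
    rw [hp, List.length_take]; omega
  have hmin : ∀ t, t < p.length → IsGeodesicWord π (p.take t) := by
    intro t ht
    rw [hplen] at ht
    rw [hp, List.take_take, min_eq_left ht.le]
    exact hmin' t ht
  obtain ⟨v, hveq, hvlt, ⟨⟨f, hfmono, -, hfd⟩, -⟩⟩ := hfftp p hn
  obtain ⟨gb, dw, hone, hd1, hev⟩ :=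
    reach_accept π δ hgen p v (by omega) hmin hveq (by omega) f hfmono hfd
  have haccept : some (gb, dw) ∈ (nfa π δ).accept := (accept_some π δ).mpr ⟨hone, hd1⟩
  have haux : ∀ z : List A, ∃ s ∈ (nfa π δ).accept, s ∈ (nfa π δ).eval (p ++ z) := by
    intro z
    induction z using List.reverseRecOn with
    | nil => exact ⟨some (gb, dw), haccept, by simpa using hev⟩
    | append_singleton z c ihz =>
      obtain ⟨s, hsa, hse⟩ := ihz
      refine ⟨none, accept_none π δ, ?_⟩
      rw [← List.append_assoc]
      refine mem_eval_append hse ?_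
      rcases s with _ | gd
      · exact step_none_none π δ
      · exact (step_some_none π δ).mpr ((accept_some π δ).mp hsa)
  obtain ⟨s, hsa, hse⟩ := haux (w.drop n)
  rw [hp, List.take_append_drop] at hse
  exact ⟨s, hsa, hse⟩

end FFTPAux

/-- **Proposition 4.1.** If a finite monoid generating set of a group has the
falsification by fellow traveller property, the language of geodesic words is regular. -/
theorem geodesic_language_regular {A G : Type*} [Fintype A] [Group G]
    (π : A → G) (hgen : Generates π) (δ : ℕ) (hfftp : FFTP π δ) :
    Language.IsRegular {w : List A | IsGeodesicWord π w} := by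
  classical
  open FFTPAux in
  have hiff : ∀ w : List A, w ∈ (FFTPAux.nfa π δ).accepts ↔ ¬ IsGeodesicWord π w :=
    fun w => ⟨FFTPAux.accepts_sound π δ,
      FFTPAux.accepts_complete π δ hgen hfftp⟩
  haveI : Fintype {g : G // g ∈ FFTPAux.Ball π δ} := (FFTPAux.ball_finite π δ).fintype
  haveI : Fintype (FFTPAux.StT π δ) := inferInstance
  let D := (FFTPAux.nfa π δ).toDFA
  let C : DFA A (Set (FFTPAux.StT π δ)) := ⟨D.step, D.start, D.acceptᶜ⟩
  have hC : ∀ w : List A, w ∈ C.accepts ↔ w ∉ D.accepts := by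
    intro w
    rw [DFA.mem_accepts, DFA.mem_accepts]
    exact Iff.rfl
  refine ⟨Fin (Fintype.card (Set (FFTPAux.StT π δ))), inferInstance,
    DFA.reindex (Fintype.equivFin _) C, ?_⟩
  rw [DFA.accepts_reindex]
  ext w
  have h1 := hC w
  have h2 : w ∈ D.accepts ↔ w ∈ (FFTPAux.nfa π δ).accepts := by
    rw [NFA.toDFA_correct]
  rw [h1, h2, hiff w]
  exact not_not
end

section
/- Every finite monoid generating set of a finitely generated abelian group has the falsification by fellow traveller property: there exists δ such that any non-geodesic word is asynchronously δ-fellow travelled by a shorter word with the same value. -/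
/-! Words over a finite monoid generating set of a group, word length,
directed Cayley-graph distance, paths, asynchronous fellow travelling,
and the falsification-by-fellow-traveller property. -/

variable {A G : Type*} [Group G]

/-! In an abelian group the value of a word depends only on the multiset of its letters.
By Dickson's lemma the minimal multisets whose product is shorter than their size form a finite
set, so their sizes are bounded by some `K`. A non-geodesic word `w` contains such a multiset `m`;
erasing the letters of `m` from `w` and appending a geodesic for their product gives a shorter
word with the same value. Matching each prefix of `w` with what survives of it, the two paths
differ at matched times by the product of at most `K` erased letters and of a prefix of the
appended geodesic, which is a uniformly bounded distance. -/

section EraseMultiset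

variable [DecidableEq A]

def eraseMultiset : Multiset A → List A → List A
  | _, [] => []
  | m, a :: w => if a ∈ m then eraseMultiset (m.erase a) w else a :: eraseMultiset m w

theorem eraseMultiset_append (m : Multiset A) (x y : List A) :
    eraseMultiset m (x ++ y) = eraseMultiset m x ++ eraseMultiset (m - (x : Multiset A)) y := by
  induction x generalizing m with
  | nil => simp [eraseMultiset]
  | cons a x ih =>
    rw [← Multiset.cons_coe, Multiset.sub_cons]
    by_cases ha : a ∈ m
    · simp only [List.cons_append, eraseMultiset, if_pos ha, ih]
    · simp only [List.cons_append, eraseMultiset, if_neg ha, ih, Multiset.erase_of_notMem ha,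
        List.cons_append]

theorem eraseMultiset_sublist (m : Multiset A) (w : List A) :
    (eraseMultiset m w).Sublist w := by
  induction w generalizing m with
  | nil => exact List.Sublist.slnil
  | cons a w ih =>
    unfold eraseMultiset
    split_ifs
    · exact (ih _).cons a
    · exact (ih m).cons_cons a

theorem eraseMultiset_prefix {x y : List A} (m : Multiset A) (h : x <+: y) :
    eraseMultiset m x <+: eraseMultiset m y := by
  obtain ⟨r, rfl⟩ := h
  rw [eraseMultiset_append]
  exact List.prefix_append _ _

theorem coe_eq_inter_add_eraseMultiset (m : Multiset A) (w : List A) :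
    (w : Multiset A) = m ∩ w + (eraseMultiset m w : Multiset A) := by
  induction w generalizing m with
  | nil => simp [eraseMultiset]
  | cons a w ih =>
    rw [← Multiset.cons_coe, Multiset.inter_comm]
    by_cases ha : a ∈ m
    · rw [Multiset.cons_inter_of_pos _ ha, eraseMultiset, if_pos ha, Multiset.cons_add,
        Multiset.inter_comm, ← ih]
    · rw [Multiset.cons_inter_of_neg _ ha, eraseMultiset, if_neg ha, ← Multiset.cons_coe,
        Multiset.add_cons, Multiset.inter_comm, ← ih]

theorem monotone_length_eraseMultiset_take (m : Multiset A) (w : List A) :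
    Monotone fun n => (eraseMultiset m (w.take n)).length := fun _ _ h =>
  (eraseMultiset_prefix m (List.take_prefix_take_left h)).length_le

theorem length_eraseMultiset_take_succ_le (m : Multiset A) (w : List A) (n : ℕ) :
    (eraseMultiset m (w.take (n + 1))).length ≤ (eraseMultiset m (w.take n)).length + 1 := by
  rw [List.take_add_one, eraseMultiset_append, List.length_append]
  have := (eraseMultiset_sublist (m - (w.take n : Multiset A)) w[n]?.toList).length_le
  have : w[n]?.toList.length ≤ 1 := by cases w[n]? <;> simp
  omega

end EraseMultiset

section WordLength

variable {π : A → G}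

theorem evalWord_append (u v : List A) :
    evalWord π (u ++ v) = evalWord π u * evalWord π v := by
  simp [evalWord]

theorem wordLen_le_length {g : G} (w : List A) (h : evalWord π w = g) :
    wordLen π g ≤ w.length :=
  Nat.sInf_le ⟨w, h, rfl⟩

theorem Generates.exists_length_eq_wordLen (hgen : Generates π) (g : G) :
    ∃ w : List A, evalWord π w = g ∧ w.length = wordLen π g :=
  Nat.sInf_mem (s := {n | ∃ w : List A, evalWord π w = g ∧ w.length = n})
    (let ⟨w, hw⟩ := hgen g; ⟨w.length, w, hw, rfl⟩)

theorem Generates.wordLen_mul_le (hgen : Generates π) (g h : G) :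
    wordLen π (g * h) ≤ wordLen π g + wordLen π h := by
  obtain ⟨u, rfl, hu⟩ := hgen.exists_length_eq_wordLen g
  obtain ⟨v, rfl, hv⟩ := hgen.exists_length_eq_wordLen h
  rw [← hu, ← hv, ← List.length_append]
  exact wordLen_le_length _ (evalWord_append u v)

theorem Generates.wordLen_inv_evalWord_le (hgen : Generates π) {C : ℕ}
    (hC : ∀ a, wordLen π (π a)⁻¹ ≤ C) (w : List A) :
    wordLen π (evalWord π w)⁻¹ ≤ C * w.length := by
  induction w with
  | nil => exact (wordLen_le_length [] (by simp [evalWord])).trans_eq (by simp)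
  | cons a w ih =>
    calc wordLen π (evalWord π (a :: w))⁻¹
        = wordLen π ((evalWord π w)⁻¹ * (π a)⁻¹) := by simp [evalWord]
      _ ≤ C * w.length + C := (hgen.wordLen_mul_le _ _).trans (Nat.add_le_add ih (hC a))
      _ = C * (a :: w).length := by simp [Nat.mul_succ]

end WordLength

section Reparametrization

variable {π : A → G}

theorem apply_find_eq_of_le_succ {β : ℕ → ℕ} (h0 : β 0 = 0) (hstep : ∀ n, β (n + 1) ≤ β n + 1)
    {s : ℕ} (hs : ∃ n, s ≤ β n) : β (Nat.find hs) = s := by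
  refine le_antisymm ?_ (Nat.find_spec hs)
  rcases Nat.eq_zero_or_eq_succ_pred (Nat.find hs) with h | h
  · rw [h, h0]
    exact Nat.zero_le s
  · have hlt : β (Nat.find hs - 1) < s := not_le.mp (Nat.find_min hs (by omega))
    rw [h]
    exact (hstep _).trans hlt

theorem asyncFellow_of_reparam {δ : ℕ} {p q : ℕ → G} {β : ℕ → ℕ} (hmono : Monotone β)
    (h0 : β 0 = 0) (hstep : ∀ n, β (n + 1) ≤ β n + 1) (hunbdd : ∀ N, ∃ n, N ≤ β n)
    (hpq : ∀ n, cayleyDist π (p n) (q (β n)) ≤ δ)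
    (hqp : ∀ n, cayleyDist π (q (β n)) (p n) ≤ δ) :
    AsyncFellow π δ p q := by
  have hβ (s : ℕ) : β (Nat.find (hunbdd s)) = s := apply_find_eq_of_le_succ h0 hstep (hunbdd s)
  refine ⟨⟨β, hmono, hunbdd, hpq⟩, fun s => Nat.find (hunbdd s), ?_, ?_, ?_⟩
  · exact fun s t hst => Nat.find_mono fun n hn => hst.trans hn
  · intro N
    refine ⟨β N + 1, not_lt.mp fun hlt => ?_⟩
    have := hmono hlt.le
    rw [hβ] at this
    omega
  · intro s
    simpa only [hβ] using hqp (Nat.find (hunbdd s))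

end Reparametrization

theorem exists_bounded_le_of_wellQuasiOrderedLE {α : Type*} [PartialOrder α]
    [WellQuasiOrderedLE α] (P : α → Prop) (f : α → ℕ) : ∃ K, ∀ a, P a → ∃ b ≤ a, P b ∧ f b ≤ K := by
  have hfin : {x | Minimal P x}.Finite :=
    (setOfPred_minimal_antichain P).finite_of_partiallyWellOrderedOn
      (Set.isPWO_of_wellQuasiOrderedLE _)
  obtain ⟨K, hK⟩ := (hfin.image f).bddAbove
  refine ⟨K, fun a ha => ?_⟩
  obtain ⟨b, hba, hb⟩ := exists_minimal_le_of_wellFoundedLT P a ha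
  exact ⟨b, hba, hb.prop, hK ⟨b, hb, rfl⟩⟩

instance Multiset.wellQuasiOrderedLE {α : Type*} [Finite α] :
    WellQuasiOrderedLE (Multiset α) := by
  classical
  exact Finsupp.orderIsoMultiset.wellQuasiOrderedLE_iff.1 inferInstance

section Abelian

variable {G : Type*} [CommGroup G] {π : A → G}

theorem evalWord_eq_prod_map (w : List A) : evalWord π w = ((w : Multiset A).map π).prod := by
  simp [evalWord]

theorem wordLen_prod_map_le (s : Multiset A) : wordLen π (s.map π).prod ≤ Multiset.card s := by
  simpa only [Multiset.length_toList] using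
    wordLen_le_length s.toList (by rw [evalWord_eq_prod_map, Multiset.coe_toList])

theorem Generates.wordLen_inv_prod_map_le (hgen : Generates π) {C : ℕ}
    (hC : ∀ a, wordLen π (π a)⁻¹ ≤ C) (s : Multiset A) :
    wordLen π ((s.map π).prod)⁻¹ ≤ C * Multiset.card s := by
  simpa only [evalWord_eq_prod_map, Multiset.coe_toList, Multiset.length_toList] using
    hgen.wordLen_inv_evalWord_le hC s.toList

theorem Generates.cayleyDist_mul_le (hgen : Generates π) {C : ℕ}
    (hC : ∀ a, wordLen π (π a)⁻¹ ≤ C) (s t : Multiset A) (x : G) :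
    cayleyDist π ((s.map π).prod * x) (x * (t.map π).prod) ≤
      C * Multiset.card s + Multiset.card t := by
  rw [cayleyDist, mul_comm _ x, mul_inv_rev, mul_assoc, inv_mul_cancel_left]
  exact (hgen.wordLen_mul_le _ _).trans
    (Nat.add_le_add (hgen.wordLen_inv_prod_map_le hC s) (wordLen_prod_map_le t))

variable [DecidableEq A]

theorem pathOf_eq_prod_map_mul (m : Multiset A) (w : List A) (n : ℕ) :
    pathOf π w n =
      ((m ∩ (w.take n : Multiset A)).map π).prod * evalWord π (eraseMultiset m (w.take n)) := by
  rw [pathOf, evalWord_eq_prod_map, evalWord_eq_prod_map (eraseMultiset m _), ← Multiset.prod_add,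
    ← Multiset.map_add, ← coe_eq_inter_add_eraseMultiset]

theorem take_eraseMultiset_append (m : Multiset A) (w v : List A) (n : ℕ) :
    (eraseMultiset m w ++ v).take ((eraseMultiset m (w.take n)).length + (n - w.length)) =
      eraseMultiset m (w.take n) ++ v.take (n - w.length) := by
  rcases le_or_gt n w.length with h | h
  · obtain ⟨r, hr⟩ := eraseMultiset_prefix m (List.take_prefix n w)
    rw [← hr, Nat.sub_eq_zero_of_le h]
    simp
  · rw [List.take_of_length_le h.le, List.take_length_add_append]

theorem Generates.asyncFellow_eraseMultiset_append (hgen : Generates π) {C K : ℕ}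
    (hC : ∀ a, wordLen π (π a)⁻¹ ≤ C) (m : Multiset A) (w v : List A)
    (hm : Multiset.card m ≤ K) (hv : v.length ≤ K) :
    AsyncFellow π (C * K + K) (pathOf π w) (pathOf π (eraseMultiset m w ++ v)) := by
  have hpath (n : ℕ) :
      pathOf π (eraseMultiset m w ++ v)
          ((eraseMultiset m (w.take n)).length + (n - w.length)) =
        evalWord π (eraseMultiset m (w.take n)) *
          ((v.take (n - w.length) : Multiset A).map π).prod := by
    rw [pathOf, take_eraseMultiset_append, evalWord_append, evalWord_eq_prod_map (v.take _)]
  have hcard_inter (n : ℕ) : Multiset.card (m ∩ (w.take n : Multiset A)) ≤ K :=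
    (Multiset.card_le_card Multiset.inter_le_left).trans hm
  have hcard_take (n : ℕ) : Multiset.card (v.take n : Multiset A) ≤ K := by
    simpa using (List.length_take_le' n v).trans hv
  -- Time `n` on `w` is matched with the number of letters of `w.take n` that survive the erasure;
  -- once `w` has ended, the appended word `v` is traversed while `w`'s path stays put.
  refine asyncFellow_of_reparam
    (β := fun n => (eraseMultiset m (w.take n)).length + (n - w.length))
    ((monotone_length_eraseMultiset_take m w).add fun _ _ h => Nat.sub_le_sub_right h _)
    (by simp [eraseMultiset]) (fun n => ?_) (fun N => ⟨N + w.length, by omega⟩)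
    (fun n => ?_) (fun n => ?_)
  · rcases lt_or_ge n w.length with h | h
    · have := length_eraseMultiset_take_succ_le m w n
      omega
    · simp only [List.take_of_length_le h, List.take_of_length_le (h.trans n.le_succ)]
      omega
  · rw [pathOf_eq_prod_map_mul m w n, hpath]
    exact (hgen.cayleyDist_mul_le hC _ _ _).trans
      (Nat.add_le_add (Nat.mul_le_mul_left C (hcard_inter n)) (hcard_take _))
  · rw [pathOf_eq_prod_map_mul m w n, hpath, mul_comm (evalWord π _),
      mul_comm ((m ∩ _).map π).prod]
    exact (hgen.cayleyDist_mul_le hC _ _ _).trans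
      (Nat.add_le_add (Nat.mul_le_mul_left C (hcard_take _)) (hcard_inter n))

end Abelian

/-- **Proposition 4.4 (abelian case).** Every finite monoid generating set of a
finitely generated abelian group has the falsification by fellow traveller property. -/
theorem abelian_fftp {A G : Type*} [Fintype A] [CommGroup G]
    (π : A → G) (hgen : Generates π) :
    ∃ δ : ℕ, FFTP π δ := by
  classical
  obtain ⟨C, hC⟩ := Finite.exists_le fun a => wordLen π (π a)⁻¹
  obtain ⟨K, hK⟩ := exists_bounded_le_of_wellQuasiOrderedLE
    (fun s : Multiset A => wordLen π (s.map π).prod < Multiset.card s) Multiset.card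
  refine ⟨C * K + K, fun w hw => ?_⟩
  have hw_short : wordLen π ((w : Multiset A).map π).prod < Multiset.card (w : Multiset A) := by
    rw [← evalWord_eq_prod_map, Multiset.coe_card]
    exact (wordLen_le_length w rfl).lt_of_ne fun h => hw h.symm
  obtain ⟨m, hmw, hm_short, hmK⟩ := hK w hw_short
  obtain ⟨v, hv, hv_len⟩ := hgen.exists_length_eq_wordLen (m.map π).prod
  have hw_split := coe_eq_inter_add_eraseMultiset m w
  rw [le_antisymm Multiset.inter_le_left (Multiset.le_inter le_rfl hmw)] at hw_split
  refine ⟨eraseMultiset m w ++ v, ?_, ?_,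
    hgen.asyncFellow_eraseMultiset_append hC m w v hmK (by omega)⟩
  · rw [evalWord_append, hv, evalWord_eq_prod_map w, hw_split, Multiset.map_add,
      Multiset.prod_add, evalWord_eq_prod_map, mul_comm]
  · have := congrArg Multiset.card hw_split
    simp only [Multiset.coe_card, Multiset.card_add] at this
    rw [List.length_append]
    omega
end

section
/- In a δ-hyperbolic geodesic metric space, given λ ≥ 1 and ε ≥ 0, there is a constant t with the following property: if v and v′ are (λ,ε)-quasigeodesics emanating from a common point such that v^{-1}v′ is also a (λ,ε)-quasigeodesic, and ν, ν′ are geodesics with the same endpoints as v, v′ respectively, then ν and ν′ cannot 2δ-fellow travel for distance more than t. -/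
open Set

/-- The Gromov product `(x·y)_w`. -/
noncomputable def gromovProd {Y : Type*} [MetricSpace Y] (w x y : Y) : ℝ :=
  (dist x w + dist y w - dist x y) / 2

/-- `Y` is `δ`-hyperbolic (four point condition). -/
def GromovHyperbolic (Y : Type*) [MetricSpace Y] (δ : ℝ) : Prop :=
  ∀ w x y z : Y, min (gromovProd w x y) (gromovProd w y z) - δ ≤ gromovProd w x z

/-- `Y` is a geodesic metric space. -/
def GeodesicSpace (Y : Type*) [MetricSpace Y] : Prop :=
  ∀ x y : Y, ∃ γ : ℝ → Y, γ 0 = x ∧ γ (dist x y) = y ∧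
    ∀ s ∈ Icc (0 : ℝ) (dist x y), ∀ t ∈ Icc (0 : ℝ) (dist x y),
      dist (γ s) (γ t) = |s - t|

/-- `γ` is a `(l, ε)`-quasigeodesic on the interval `[a, b]`. -/
def QuasiGeodesicOn {Y : Type*} [MetricSpace Y] (γ : ℝ → Y) (a b l ε : ℝ) : Prop :=
  ∀ s t : ℝ, a ≤ s → s ≤ t → t ≤ b →
    (t - s) / l - ε ≤ dist (γ s) (γ t) ∧ dist (γ s) (γ t) ≤ l * (t - s) + ε

/-- `γ` is a `k`-local `(l, ε)`-quasigeodesic on `[a, b]`: every subpath of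
length at most `k` is a `(l, ε)`-quasigeodesic. -/
def LocalQuasiGeodesicOn {Y : Type*} [MetricSpace Y] (γ : ℝ → Y) (a b k l ε : ℝ) : Prop :=
  ∀ a' b' : ℝ, a ≤ a' → b' ≤ b → b' - a' ≤ k → QuasiGeodesicOn γ a' b' l ε

/-- **(Key step in the proof of Lemma 4.8.)** In a `δ`-hyperbolic geodesic space,
given `l ≥ 1`, `ε ≥ 0` and a Morse constant `ε''` for `(l,ε)`-quasigeodesics,
there is a constant `t` such that: if `w` is an `(l,ε)`-quasigeodesic on `[-T, T']`
through `p = w 0` (so its two halves `v, v'` emanate from `p` and `v⁻¹v'` is an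
`(l,ε)`-quasigeodesic), and `ν, ν'` are unit-speed geodesics from `p` to the
endpoints `w (-T)` and `w T'` respectively which stay within `ε''` of the
corresponding halves of `w`, then `ν` and `ν'` cannot `2δ`-fellow travel for
distance more than `t`. -/
theorem geodesics_diverge_after_t {Y : Type*} [MetricSpace Y] (δ : ℝ) (hδ : 0 ≤ δ)
    (hhyp : GromovHyperbolic Y δ) (hgeo : GeodesicSpace Y)
    (l ε ε'' : ℝ) (hl : 1 ≤ l) (hε : 0 ≤ ε) (hε'' : 0 ≤ ε'') :
    ∃ t : ℝ, ∀ (T T' : ℝ) (w : ℝ → Y) (p : Y) (L L' : ℝ) (ν ν' : ℝ → Y),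
      0 ≤ T → 0 ≤ T' → w 0 = p →
      QuasiGeodesicOn w (-T) T' l ε →
      L = dist p (w (-T)) → L' = dist p (w T') →
      ν 0 = p → ν L = w (-T) →
      (∀ s ∈ Set.Icc (0:ℝ) L, ∀ u ∈ Set.Icc (0:ℝ) L, dist (ν s) (ν u) = |s - u|) →
      ν' 0 = p → ν' L' = w T' →
      (∀ s ∈ Set.Icc (0:ℝ) L', ∀ u ∈ Set.Icc (0:ℝ) L', dist (ν' s) (ν' u) = |s - u|) →
      (∀ s ∈ Set.Icc (0:ℝ) L, ∃ u ∈ Set.Icc (-T) (0:ℝ), dist (ν s) (w u) ≤ ε'') →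
      (∀ s ∈ Set.Icc (0:ℝ) L', ∃ u ∈ Set.Icc (0:ℝ) T', dist (ν' s) (w u) ≤ ε'') →
      ∀ t₀ : ℝ, 0 ≤ t₀ → t₀ ≤ L → t₀ ≤ L' →
        dist (ν t₀) (ν' t₀) ≤ 2 * δ → t₀ ≤ t := by
  refine ⟨(l ^ 2 * (2 * ε'' + 2 * δ + ε) + 2 * ε + 2 * ε'') / 2, ?_⟩
  intro T T' w p L L' ν ν' hT hT' hw0 hw hL hL' hν0 hνL hνiso hν'0 hν'L' hν'iso
    hMorse hMorse' t₀ ht₀ ht₀L ht₀L' hclose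
  have hl0 : (0:ℝ) < l := lt_of_lt_of_le one_pos hl
  obtain ⟨u, ⟨huT, hu0⟩, hu⟩ := hMorse t₀ ⟨ht₀, ht₀L⟩
  obtain ⟨u', ⟨hu'0, hu'T⟩, hu'⟩ := hMorse' t₀ ⟨ht₀, ht₀L'⟩
  -- dist p (ν t₀) = t₀
  have h0L : (0:ℝ) ≤ L := le_trans ht₀ ht₀L
  have h0L' : (0:ℝ) ≤ L' := le_trans ht₀ ht₀L'
  have hd1 : dist (ν 0) (ν t₀) = t₀ := by
    rw [hνiso 0 ⟨le_refl 0, h0L⟩ t₀ ⟨ht₀, ht₀L⟩]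
    rw [abs_of_nonpos (by linarith)]; ring
  have hd2 : dist (ν' 0) (ν' t₀) = t₀ := by
    rw [hν'iso 0 ⟨le_refl 0, h0L'⟩ t₀ ⟨ht₀, ht₀L'⟩]
    rw [abs_of_nonpos (by linarith)]; ring
  -- quasigeodesic bounds
  have hq1 := (hw u 0 huT hu0 hT').2
  have hq2 := (hw 0 u' (by linarith) hu'0 hu'T).2
  have hq3 := (hw u u' huT (le_trans hu0 hu'0) hu'T).1
  -- upper bound on u' - u
  have hdu : dist (w u) (w u') ≤ 2 * ε'' + 2 * δ := by
    calc dist (w u) (w u') ≤ dist (w u) (ν t₀) + dist (ν t₀) (ν' t₀) + dist (ν' t₀) (w u') :=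
          dist_triangle4 _ _ _ _
      _ ≤ ε'' + 2 * δ + ε'' := by
          have := dist_comm (ν t₀) (w u) ▸ hu
          have := dist_comm (ν' t₀) (w u') ▸ hu'
          rw [dist_comm (w u) (ν t₀)]; linarith
      _ = 2 * ε'' + 2 * δ := by ring
  have hu'u : u' - u ≤ l * (2 * ε'' + 2 * δ + ε) := by
    have h := hq3.trans hdu
    have : (u' - u) / l ≤ 2 * ε'' + 2 * δ + ε := by linarith
    calc u' - u = (u' - u) / l * l := by field_simp
      _ ≤ (2 * ε'' + 2 * δ + ε) * l := by
          exact mul_le_mul_of_nonneg_right this hl0.le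
      _ = l * (2 * ε'' + 2 * δ + ε) := by ring
  -- t₀ ≤ dist p (w u) + ε'' ≤ l*(-u) + ε + ε''
  have ht1 : t₀ ≤ l * (0 - u) + ε + ε'' := by
    have : dist (ν 0) (ν t₀) ≤ dist (w u) (w 0) + dist (ν t₀) (w u) := by
      rw [hν0, hw0, dist_comm (w u) p]
      calc dist p (ν t₀) ≤ dist p (w u) + dist (w u) (ν t₀) := dist_triangle _ _ _
        _ = dist p (w u) + dist (ν t₀) (w u) := by rw [dist_comm (w u) (ν t₀)]
    rw [hd1] at this; linarith
  have ht2 : t₀ ≤ l * (u' - 0) + ε + ε'' := by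
    have : dist (ν' 0) (ν' t₀) ≤ dist (w 0) (w u') + dist (ν' t₀) (w u') := by
      rw [hν'0, hw0]
      calc dist p (ν' t₀) ≤ dist p (w u') + dist (w u') (ν' t₀) := dist_triangle _ _ _
        _ = dist p (w u') + dist (ν' t₀) (w u') := by rw [dist_comm (w u') (ν' t₀)]
    rw [hd2] at this
    have hw0u' : dist (w 0) (w u') ≤ l * (u' - 0) + ε := hq2
    linarith
  nlinarith [sq_nonneg l, mul_le_mul_of_nonneg_left hu'u hl0.le]
end
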